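/- arXiv:2407.02100 — 8 statements merged into one kernel-verified Lean document; each statement's English description precedes it below -/
import Mathlib

section
/- Let A be a real n×n matrix and let (Π₁, A₁), …, (Π_J, A_J) be a finite list of patches, where each Πⱼ is a real mⱼ×n matrix and each Aⱼ is an invertible real mⱼ×mⱼ matrix. Assume the patches are mutually non-overlapping through A: Πᵢ * A * Πⱼᵀ = 0 for all i ≠ j. Then the multiplicative product of the corrections equals the additive one: (1 − P_J) * ⋯ * (1 − P₁) = 1 − (∑ⱼ Πⱼᵀ * Aⱼ⁻¹ * Πⱼ) * A, where Pⱼ = Πⱼᵀ * Aⱼ⁻¹ * Πⱼ * A. -/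
open Matrix

/-- For a family of mutually non-overlapping patches (a color), the multiplicative
product of the corrections equals the additive one:
`(1 − P_J) * ⋯ * (1 − P₁) = 1 − (∑ⱼ Πⱼᵀ * Aⱼ⁻¹ * Πⱼ) * A`. -/
theorem multiplicative_eq_additive_for_color
    {n J : ℕ} (A : Matrix (Fin n) (Fin n) ℝ)
    (m : Fin J → ℕ)
    (Pr : ∀ j : Fin J, Matrix (Fin (m j)) (Fin n) ℝ)
    (Aj : ∀ j : Fin J, Matrix (Fin (m j)) (Fin (m j)) ℝ)
    (hAj : ∀ j, IsUnit (Aj j).det)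
    (hortho : ∀ i j : Fin J, i ≠ j → Pr i * A * (Pr j)ᵀ = 0) :
    ((List.ofFn fun j : Fin J =>
        (1 : Matrix (Fin n) (Fin n) ℝ) - (Pr j)ᵀ * (Aj j)⁻¹ * Pr j * A).reverse).prod =
      1 - (∑ j : Fin J, (Pr j)ᵀ * (Aj j)⁻¹ * Pr j) * A := by
  induction J with
  | zero => simp
  | succ J ih =>
    rw [List.ofFn_succ']
    have ihJ := ih (fun i => m i.castSucc) (fun i => Pr i.castSucc)
      (fun i => Aj i.castSucc) (fun i => hAj i.castSucc)
      (fun i j hij => hortho i.castSucc j.castSucc (by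
        simpa [Fin.castSucc_inj] using hij))
    simp only [List.concat_eq_append, List.reverse_append, List.reverse_cons,
      List.reverse_nil, List.nil_append, List.singleton_append, List.prod_cons]
    rw [ihJ, Fin.sum_univ_castSucc]
    have hcross : ((Pr (Fin.last J))ᵀ * (Aj (Fin.last J))⁻¹ * Pr (Fin.last J) * A) *
        ((∑ i : Fin J, (Pr i.castSucc)ᵀ * (Aj i.castSucc)⁻¹ * Pr i.castSucc) * A) = 0 := by
      rw [Finset.sum_mul, Finset.mul_sum]
      refine Finset.sum_eq_zero fun i _ => ?_
      have h0 := hortho (Fin.last J) i.castSucc (Fin.castSucc_lt_last i).ne'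
      calc (Pr (Fin.last J))ᵀ * (Aj (Fin.last J))⁻¹ * Pr (Fin.last J) * A *
            ((Pr i.castSucc)ᵀ * (Aj i.castSucc)⁻¹ * Pr i.castSucc * A)
          = (Pr (Fin.last J))ᵀ * (Aj (Fin.last J))⁻¹ *
            (Pr (Fin.last J) * A * (Pr i.castSucc)ᵀ) *
            ((Aj i.castSucc)⁻¹ * (Pr i.castSucc * A)) := by
              simp only [Matrix.mul_assoc]
        _ = 0 := by rw [h0]; simp
    have expand : ∀ (Q S : Matrix (Fin n) (Fin n) ℝ), Q * S = 0 →
        (1 - Q) * (1 - S) = 1 - (S + Q) := by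
      intro Q S h
      rw [sub_mul, one_mul, mul_sub, mul_one, h]
      abel
    rw [add_mul]
    exact expand _ _ hcross
end

section
/- Let A be a real n×n matrix and let a finite family of patches (Πⱼ, Aⱼ), j = 1, …, J, be given, where each Πⱼ is a real mⱼ×n matrix and each Aⱼ is an invertible real mⱼ×mⱼ matrix, with Ritz projections Pⱼ = Πⱼᵀ * Aⱼ⁻¹ * Πⱼ * A. Suppose the ordered list of patches is partitioned into consecutive blocks (colors) C₁, …, C_K such that within each color, Πᵢ * A * Πⱼᵀ = 0 for all distinct i, j ∈ C_k. Then the colorized error propagation operator equals the multiplicative one: ∏_{k=K}^{1} (1 − (∑_{j ∈ C_k} Πⱼᵀ * Aⱼ⁻¹ * Πⱼ) * A) = ∏ over the whole ordered list (in reverse order) of (1 − Pⱼ). -/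
open Matrix

/-- A patch for a problem of global size `n`: a local size `m`, a restriction
(selection) matrix `Pi : Matrix (Fin m) (Fin n) ℝ` and a local matrix
`Aloc : Matrix (Fin m) (Fin m) ℝ`. -/
structure Patch (n : ℕ) where
  m : ℕ
  Pi : Matrix (Fin m) (Fin n) ℝ
  Aloc : Matrix (Fin m) (Fin m) ℝ

/-- The local solver (Ritz projection) `P = Πᵀ * A_loc⁻¹ * Π * A` of a patch. -/
noncomputable def Patch.P {n : ℕ} (A : Matrix (Fin n) (Fin n) ℝ) (p : Patch n) :
    Matrix (Fin n) (Fin n) ℝ :=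
  p.Piᵀ * p.Aloc⁻¹ * p.Pi * A

lemma color_prod {n : ℕ} (A : Matrix (Fin n) (Fin n) ℝ) (C : List (Patch n))
    (h : C.Pairwise fun p q => p.Pi * A * q.Piᵀ = 0 ∧ q.Pi * A * p.Piᵀ = 0) :
    ((C.reverse.map fun p => (1 : Matrix (Fin n) (Fin n) ℝ) - p.P A)).prod =
      1 - (C.map fun p => p.Piᵀ * p.Aloc⁻¹ * p.Pi).sum * A := by
  induction C with
  | nil => simp
  | cons p t ih =>
    rw [List.pairwise_cons] at h
    have ht := ih h.2
    have sum_mul : ∀ (l : List (Matrix (Fin n) (Fin n) ℝ)) (B : Matrix (Fin n) (Fin n) ℝ),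
        l.sum * B = (l.map (· * B)).sum := by
      intro l B
      induction l with
      | nil => simp
      | cons x xs ihl => simp [add_mul, ihl]
    have hz : (t.map fun q => q.Piᵀ * q.Aloc⁻¹ * q.Pi).sum * A *
        (p.Piᵀ * p.Aloc⁻¹ * p.Pi) = 0 := by
      rw [sum_mul, sum_mul]
      simp only [List.map_map]
      apply List.sum_eq_zero
      intro x hx
      simp only [List.mem_map, Function.comp] at hx
      obtain ⟨q, hq, rfl⟩ := hx
      have hqz : q.Pi * A * p.Piᵀ = 0 := (h.1 q hq).2
      calc q.Piᵀ * q.Aloc⁻¹ * q.Pi * A * (p.Piᵀ * p.Aloc⁻¹ * p.Pi)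
          = q.Piᵀ * q.Aloc⁻¹ * (q.Pi * A * p.Piᵀ) * (p.Aloc⁻¹ * p.Pi) := by
            simp only [Matrix.mul_assoc]
        _ = 0 := by rw [hqz]; simp
    rw [List.reverse_cons, List.map_append, List.prod_append, ht]
    simp only [List.map_cons, List.map_nil, List.prod_cons, List.prod_nil, mul_one,
      List.sum_cons, Patch.P]
    have expand : ((1 : Matrix (Fin n) (Fin n) ℝ) -
        (t.map fun q => q.Piᵀ * q.Aloc⁻¹ * q.Pi).sum * A) *
        (1 - p.Piᵀ * p.Aloc⁻¹ * p.Pi * A) =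
        1 - (p.Piᵀ * p.Aloc⁻¹ * p.Pi + (t.map fun q => q.Piᵀ * q.Aloc⁻¹ * q.Pi).sum) * A
        + ((t.map fun q => q.Piᵀ * q.Aloc⁻¹ * q.Pi).sum * A *
            (p.Piᵀ * p.Aloc⁻¹ * p.Pi)) * A := by
      noncomm_ring
    rw [expand, hz]
    simp

/-- If the ordered list of patches is partitioned into consecutive blocks
(colors) `C₁, …, C_K` such that within each color the patches are mutually
non-overlapping through `A` (`Πᵢ * A * Πⱼᵀ = 0` for distinct `i, j` in the
color), then the colorized error propagation operator equals the multiplicative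
one: `∏_{k=K}^{1} (1 − (∑_{j ∈ C_k} Πⱼᵀ * Aⱼ⁻¹ * Πⱼ) * A)` equals the reverse
ordered product of the `1 − Pⱼ` over the whole list. -/
theorem colorized_error_propagation_eq_multiplicative
    {n : ℕ} (A : Matrix (Fin n) (Fin n) ℝ)
    (LL : List (List (Patch n)))
    (hinv : ∀ p ∈ LL.flatten, IsUnit p.Aloc.det)
    (hcolor : ∀ C ∈ LL,
      C.Pairwise fun p q => p.Pi * A * q.Piᵀ = 0 ∧ q.Pi * A * p.Piᵀ = 0) :
    ((LL.reverse.map fun C =>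
        (1 : Matrix (Fin n) (Fin n) ℝ) -
          (C.map fun p => p.Piᵀ * p.Aloc⁻¹ * p.Pi).sum * A)).prod =
      ((LL.flatten.reverse.map fun p =>
        (1 : Matrix (Fin n) (Fin n) ℝ) - p.P A)).prod := by
  induction LL with
  | nil => simp
  | cons C rest ih =>
    have hC := hcolor C (by simp)
    have hrest := ih (fun p hp => hinv p (by simp [hp]))
      (fun D hD => hcolor D (by simp [hD]))
    simp only [List.flatten_cons, List.reverse_append, List.reverse_cons,
      List.map_append, List.prod_append, List.map_cons, List.map_nil,
      List.prod_cons, List.prod_nil, mul_one]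
    rw [hrest, color_prod A C hC]
end

section
/- Let A be a real n×n matrix and let L be a finite list of patches (Πⱼ, Aⱼ) with each Πⱼ a real mⱼ×n matrix, each Aⱼ invertible of size mⱼ×mⱼ, and Πᵢ * A * Πⱼᵀ = 0 for all distinct patches i, j in L. Then the ordered product ∏_{j ∈ L} (1 − Pⱼ), where Pⱼ = Πⱼᵀ * Aⱼ⁻¹ * Πⱼ * A, is invariant under permutation of the list: for any list L' that is a permutation of L, the products agree. That is, a set of mutually non-overlapping patches can be processed in any order without changing the result. -/
open Matrix

/-- If two patches don't overlap, their local solvers annihilate each other. -/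
lemma patch_P_mul_zero {n : ℕ} (A : Matrix (Fin n) (Fin n) ℝ) (p q : Patch n)
    (h : p.Pi * A * q.Piᵀ = 0) : p.P A * q.P A = 0 := by
  have : p.P A * q.P A =
      p.Piᵀ * p.Aloc⁻¹ * (p.Pi * A * q.Piᵀ) * (q.Aloc⁻¹ * (q.Pi * A)) := by
    simp only [Patch.P, Matrix.mul_assoc]
  rw [this, h]
  simp [Matrix.mul_assoc]

lemma patch_commute {n : ℕ} (A : Matrix (Fin n) (Fin n) ℝ) (p q : Patch n)
    (h1 : p.Pi * A * q.Piᵀ = 0) (h2 : q.Pi * A * p.Piᵀ = 0) :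
    Commute ((1 : Matrix (Fin n) (Fin n) ℝ) - p.P A) (1 - q.P A) := by
  have hpq := patch_P_mul_zero A p q h1
  have hqp := patch_P_mul_zero A q p h2
  unfold Commute SemiconjBy
  simp only [sub_mul, mul_sub, one_mul, mul_one, hpq, hqp]
  abel

/-- A set of mutually non-overlapping patches (a color) can be processed in any
order without changing the result: the ordered product of the factors `1 − Pⱼ`
is invariant under permutation of the list of patches. -/
theorem color_product_perm_invariant
    {n : ℕ} (A : Matrix (Fin n) (Fin n) ℝ)
    (L L' : List (Patch n))
    (hinv : ∀ p ∈ L, IsUnit p.Aloc.det)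
    (hortho : L.Pairwise fun p q => p.Pi * A * q.Piᵀ = 0 ∧ q.Pi * A * p.Piᵀ = 0)
    (hperm : L.Perm L') :
    (L.map fun p => (1 : Matrix (Fin n) (Fin n) ℝ) - p.P A).prod =
      (L'.map fun p => (1 : Matrix (Fin n) (Fin n) ℝ) - p.P A).prod := by
  refine List.Perm.prod_eq' (hperm.map _) ?_
  refine List.Pairwise.map _ ?_ hortho
  intro p q ⟨h1, h2⟩
  exact patch_commute A p q h1 h2
end

section
/- Let A be a real n×n matrix, f : Fin m → Fin n and g : Fin M → Fin n injective maps with Set.range f ⊆ Set.range g, and let Π_f and Π_g be the associated selection matrices. Assume the rows of A belonging to the patch only couple to the closure of the patch: for every i : Fin m and every k : Fin n with k ∉ Set.range g, A (f i) k = 0. Then the locally computed residual agrees with the restriction of the global residual: for all u, b ∈ ℝⁿ, Π_f *ᵥ (b − A *ᵥ u) = Π_f *ᵥ b − (Π_f * A * Π_gᵀ) *ᵥ (Π_g *ᵥ u). -/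
open Matrix

/-- The selection matrix of an (injective) index map `f : Fin m → Fin n`:
`(Π_f) i k = if k = f i then 1 else 0`. -/
def sel {m n : ℕ} (f : Fin m → Fin n) : Matrix (Fin m) (Fin n) ℝ :=
  Matrix.of fun i k => if k = f i then 1 else 0

/-- If the rows of `A` belonging to the patch (selected by `f`) only couple to
the closure of the patch (selected by `g`), then the locally computed residual
agrees with the restriction of the global residual:
`Π_f *ᵥ (b − A *ᵥ u) = Π_f *ᵥ b − (Π_f * A * Π_gᵀ) *ᵥ (Π_g *ᵥ u)`. -/
theorem local_residual_eq_restricted_global_residual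
    {m M n : ℕ} (A : Matrix (Fin n) (Fin n) ℝ)
    (f : Fin m → Fin n) (g : Fin M → Fin n)
    (hf : Function.Injective f) (hg : Function.Injective g)
    (hfg : Set.range f ⊆ Set.range g)
    (hlocal : ∀ (i : Fin m) (k : Fin n), k ∉ Set.range g → A (f i) k = 0)
    (u b : Fin n → ℝ) :
    (sel f).mulVec (b - A.mulVec u) =
      (sel f).mulVec b - (sel f * A * (sel g)ᵀ).mulVec ((sel g).mulVec u) := by
  have hkey : (sel f * A * (sel g)ᵀ) * sel g = sel f * A := by
    ext i k
    simp only [Matrix.mul_apply, Matrix.transpose_apply, sel, Matrix.of_apply,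
      ite_mul, one_mul, zero_mul, mul_ite, mul_one, mul_zero,
      Finset.sum_ite_eq, Finset.sum_ite_eq', Finset.mem_univ, if_true]
    by_cases hk : k ∈ Set.range g
    · obtain ⟨j0, rfl⟩ := hk
      rw [Finset.sum_eq_single j0]
      · simp [Finset.sum_ite_eq', mul_comm]
      · intro j _ hj
        have : ¬ (g j0 = g j) := fun h => hj (hg h.symm)
        simp [this]
      · simp
    · rw [hlocal i k hk]
      apply Finset.sum_eq_zero
      intro j _
      have : ¬ (k = g j) := fun h => hk ⟨j, h.symm⟩
      simp [this]
  rw [Matrix.mulVec_sub, Matrix.mulVec_mulVec, Matrix.mulVec_mulVec, hkey]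
end

section
/- Let M₀, K₀, T₀ be real n₀×n₀ matrices and M₁, K₁, T₁ real n₁×n₁ matrices with T₀ᵀ * M₀ * T₀ = 1, T₁ᵀ * M₁ * T₁ = 1, T₀ᵀ * K₀ * T₀ = Matrix.diagonal d₀, and T₁ᵀ * K₁ * T₁ = Matrix.diagonal d₁ for vectors d₀ : Fin n₀ → ℝ and d₁ : Fin n₁ → ℝ. Assume d₁ i + d₀ j ≠ 0 for all i, j. Then the two-dimensional tensor-product operator M₁ ⊗ₖ K₀ + K₁ ⊗ₖ M₀ is invertible, and (M₁ ⊗ₖ K₀ + K₁ ⊗ₖ M₀) * ((T₁ ⊗ₖ T₀) * D⁻¹ * (T₁ᵀ ⊗ₖ T₀ᵀ)) = 1, where D = Matrix.diagonal (fun (i, j) => d₁ i + d₀ j) = (Matrix.diagonal d₁) ⊗ₖ 1 + 1 ⊗ₖ (Matrix.diagonal d₀). This is the fast diagonalization formula for the inverse in two dimensions. -/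
open Matrix Kronecker

/-!
Writing `P = T₁ ⊗ₖ T₀`, the mixed product rule turns the congruence
`Pᵀ (M₁ ⊗ₖ K₀ + K₁ ⊗ₖ M₀) P` into `1 ⊗ₖ diag d₀ + diag d₁ ⊗ₖ 1 = D`. If `Pᵀ A P = D` with `D`
invertible, then `A P D⁻¹` is a right inverse of `Pᵀ`, hence also a left inverse, which is the
claimed formula `A (P D⁻¹ Pᵀ) = 1`.
-/

namespace Matrix

theorem mul_mul_inv_mul_eq_one_of_mul_mul_eq {n R : Type*} [Fintype n] [DecidableEq n]
    [CommRing R] {A B P D : Matrix n n R} (h : B * A * P = D) (hD : IsUnit D) :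
    A * (P * D⁻¹ * B) = 1 := by
  have hB : B * (A * P * D⁻¹) = 1 := by
    rw [← Matrix.mul_assoc, ← Matrix.mul_assoc, h,
      mul_nonsing_inv _ ((isUnit_iff_isUnit_det D).mp hD)]
  simpa only [Matrix.mul_assoc] using mul_eq_one_comm.mp hB

theorem kronecker_mul_kronecker_add_kronecker_mul_kronecker {m n R : Type*} [Fintype m]
    [Fintype n] [CommSemiring R] (S₁ T₁ M₁ K₁ : Matrix m m R) (S₀ T₀ M₀ K₀ : Matrix n n R) :
    (S₁ ⊗ₖ S₀) * (M₁ ⊗ₖ K₀ + K₁ ⊗ₖ M₀) * (T₁ ⊗ₖ T₀) =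
      (S₁ * M₁ * T₁) ⊗ₖ (S₀ * K₀ * T₀) + (S₁ * K₁ * T₁) ⊗ₖ (S₀ * M₀ * T₀) := by
  simp only [Matrix.mul_add, Matrix.add_mul, mul_kronecker_mul]

theorem one_kronecker_diagonal_add_diagonal_kronecker_one {m n R : Type*} [DecidableEq m]
    [DecidableEq n] [CommSemiring R] (d₁ : m → R) (d₀ : n → R) :
    (1 : Matrix m m R) ⊗ₖ diagonal d₀ + diagonal d₁ ⊗ₖ (1 : Matrix n n R) =
      diagonal fun p : m × n => d₁ p.1 + d₀ p.2 := by
  rw [← diagonal_one, ← diagonal_one, diagonal_kronecker_diagonal, diagonal_kronecker_diagonal,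
    diagonal_add]
  simp only [one_mul, mul_one, add_comm]

end Matrix

/-- Fast diagonalization formula for the inverse in two dimensions: if `T₀, T₁`
simultaneously diagonalize the mass and stiffness matrices (`Tᵢᵀ Mᵢ Tᵢ = 1`,
`Tᵢᵀ Kᵢ Tᵢ = diag dᵢ`) and all sums of eigenvalues `d₁ i + d₀ j` are nonzero,
then `M₁ ⊗ₖ K₀ + K₁ ⊗ₖ M₀` is invertible with inverse
`(T₁ ⊗ₖ T₀) * D⁻¹ * (T₁ᵀ ⊗ₖ T₀ᵀ)`, where `D = diag (fun (i, j) => d₁ i + d₀ j)`. -/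
theorem fast_diagonalization_inverse_2D
    {n₀ n₁ : ℕ}
    (M₀ K₀ T₀ : Matrix (Fin n₀) (Fin n₀) ℝ)
    (M₁ K₁ T₁ : Matrix (Fin n₁) (Fin n₁) ℝ)
    (d₀ : Fin n₀ → ℝ) (d₁ : Fin n₁ → ℝ)
    (hM₀ : T₀ᵀ * M₀ * T₀ = 1) (hM₁ : T₁ᵀ * M₁ * T₁ = 1)
    (hK₀ : T₀ᵀ * K₀ * T₀ = Matrix.diagonal d₀)
    (hK₁ : T₁ᵀ * K₁ * T₁ = Matrix.diagonal d₁)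
    (hd : ∀ (i : Fin n₁) (j : Fin n₀), d₁ i + d₀ j ≠ 0) :
    IsUnit (M₁ ⊗ₖ K₀ + K₁ ⊗ₖ M₀) ∧
    (M₁ ⊗ₖ K₀ + K₁ ⊗ₖ M₀) *
      ((T₁ ⊗ₖ T₀) *
        (Matrix.diagonal fun p : Fin n₁ × Fin n₀ => d₁ p.1 + d₀ p.2)⁻¹ *
        (T₁ᵀ ⊗ₖ T₀ᵀ)) = 1 := by
  have hcongr : (T₁ᵀ ⊗ₖ T₀ᵀ) * (M₁ ⊗ₖ K₀ + K₁ ⊗ₖ M₀) * (T₁ ⊗ₖ T₀) =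
      Matrix.diagonal fun p : Fin n₁ × Fin n₀ => d₁ p.1 + d₀ p.2 := by
    rw [kronecker_mul_kronecker_add_kronecker_mul_kronecker, hM₀, hM₁, hK₀, hK₁,
      one_kronecker_diagonal_add_diagonal_kronecker_one]
  have hD : IsUnit (Matrix.diagonal fun p : Fin n₁ × Fin n₀ => d₁ p.1 + d₀ p.2) :=
    isUnit_diagonal.mpr (Pi.isUnit_iff.mpr fun p => (hd p.1 p.2).isUnit)
  have hinv := mul_mul_inv_mul_eq_one_of_mul_mul_eq hcongr hD
  exact ⟨IsUnit.of_mul_eq_one _ hinv, hinv⟩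
end

section
/- Let Mᵢ, Kᵢ, Tᵢ be real nᵢ×nᵢ matrices for i = 0, 1, 2 with Tᵢᵀ * Mᵢ * Tᵢ = 1 and Tᵢᵀ * Kᵢ * Tᵢ = Matrix.diagonal dᵢ for vectors dᵢ : Fin nᵢ → ℝ, and assume d₂ i + d₁ j + d₀ k ≠ 0 for all i, j, k. Then the three-dimensional tensor-product operator A_b = M₂ ⊗ₖ M₁ ⊗ₖ K₀ + M₂ ⊗ₖ K₁ ⊗ₖ M₀ + K₂ ⊗ₖ M₁ ⊗ₖ M₀ is invertible, and A_b * ((T₂ ⊗ₖ T₁ ⊗ₖ T₀) * D⁻¹ * (T₂ᵀ ⊗ₖ T₁ᵀ ⊗ₖ T₀ᵀ)) = 1, where D is the diagonal matrix with entries d₂ i + d₁ j + d₀ k. This is the fast diagonalization formula for the inverse of the local patch matrix in three dimensions. -/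
open Matrix Kronecker

/-!
The congruence by `T = T₂ ⊗ₖ T₁ ⊗ₖ T₀` acts factorwise on each Kronecker product, so it sends
`A_b` to `1 ⊗ₖ 1 ⊗ₖ diag d₀ + 1 ⊗ₖ diag d₁ ⊗ₖ 1 + diag d₂ ⊗ₖ 1 ⊗ₖ 1 = D`. From `Tᵀ A_b T = D` with
`D` invertible, `Tᵀ` has the right inverse `A_b T D⁻¹`; for square matrices it is also a left
inverse, which is exactly `A_b (T D⁻¹ Tᵀ) = 1`.
-/

namespace Matrix

variable {m n R : Type*} [Fintype m] [Fintype n]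

theorem kronecker_transpose_mul_kronecker_mul_kronecker [CommSemiring R]
    (S M : Matrix m m R) (T N : Matrix n n R) :
    (S ⊗ₖ T)ᵀ * (M ⊗ₖ N) * (S ⊗ₖ T) = (Sᵀ * M * S) ⊗ₖ (Tᵀ * N * T) := by
  rw [← kroneckerMap_transpose, ← mul_kronecker_mul, ← mul_kronecker_mul]

theorem mul_eq_one_of_transpose_mul_mul_eq [DecidableEq m] [CommRing R] {A T D : Matrix m m R}
    (hD : IsUnit D.det) (h : Tᵀ * A * T = D) : A * (T * D⁻¹ * Tᵀ) = 1 := by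
  have hright : Tᵀ * (A * T * D⁻¹) = 1 := by
    rw [← Matrix.mul_assoc, ← Matrix.mul_assoc, h, mul_nonsing_inv _ hD]
  simpa only [Matrix.mul_assoc] using mul_eq_one_comm.mp hright

end Matrix

/-- Fast diagonalization formula for the inverse of the local patch matrix in
three dimensions: if `Tᵢᵀ Mᵢ Tᵢ = 1`, `Tᵢᵀ Kᵢ Tᵢ = diag dᵢ` for `i = 0, 1, 2`
and all sums `d₂ i + d₁ j + d₀ k` are nonzero, then
`A_b = M₂ ⊗ₖ M₁ ⊗ₖ K₀ + M₂ ⊗ₖ K₁ ⊗ₖ M₀ + K₂ ⊗ₖ M₁ ⊗ₖ M₀` is invertible with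
inverse `(T₂ ⊗ₖ T₁ ⊗ₖ T₀) * D⁻¹ * (T₂ᵀ ⊗ₖ T₁ᵀ ⊗ₖ T₀ᵀ)`, where `D` is the
diagonal matrix with entries `d₂ i + d₁ j + d₀ k`. -/
theorem fast_diagonalization_inverse_3D
    {n₀ n₁ n₂ : ℕ}
    (M₀ K₀ T₀ : Matrix (Fin n₀) (Fin n₀) ℝ)
    (M₁ K₁ T₁ : Matrix (Fin n₁) (Fin n₁) ℝ)
    (M₂ K₂ T₂ : Matrix (Fin n₂) (Fin n₂) ℝ)
    (d₀ : Fin n₀ → ℝ) (d₁ : Fin n₁ → ℝ) (d₂ : Fin n₂ → ℝ)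
    (hM₀ : T₀ᵀ * M₀ * T₀ = 1) (hM₁ : T₁ᵀ * M₁ * T₁ = 1) (hM₂ : T₂ᵀ * M₂ * T₂ = 1)
    (hK₀ : T₀ᵀ * K₀ * T₀ = Matrix.diagonal d₀)
    (hK₁ : T₁ᵀ * K₁ * T₁ = Matrix.diagonal d₁)
    (hK₂ : T₂ᵀ * K₂ * T₂ = Matrix.diagonal d₂)
    (hd : ∀ (i : Fin n₂) (j : Fin n₁) (k : Fin n₀), d₂ i + d₁ j + d₀ k ≠ 0) :
    IsUnit (M₂ ⊗ₖ (M₁ ⊗ₖ K₀) + M₂ ⊗ₖ (K₁ ⊗ₖ M₀) + K₂ ⊗ₖ (M₁ ⊗ₖ M₀)) ∧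
    (M₂ ⊗ₖ (M₁ ⊗ₖ K₀) + M₂ ⊗ₖ (K₁ ⊗ₖ M₀) + K₂ ⊗ₖ (M₁ ⊗ₖ M₀)) *
      ((T₂ ⊗ₖ (T₁ ⊗ₖ T₀)) *
        (Matrix.diagonal fun p : Fin n₂ × (Fin n₁ × Fin n₀) =>
          d₂ p.1 + d₁ p.2.1 + d₀ p.2.2)⁻¹ *
        (T₂ᵀ ⊗ₖ (T₁ᵀ ⊗ₖ T₀ᵀ))) = 1 := by
  set D : Fin n₂ × (Fin n₁ × Fin n₀) → ℝ := fun p => d₂ p.1 + d₁ p.2.1 + d₀ p.2.2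
  have hTt : T₂ᵀ ⊗ₖ (T₁ᵀ ⊗ₖ T₀ᵀ) = (T₂ ⊗ₖ (T₁ ⊗ₖ T₀))ᵀ := by
    rw [kroneckerMap_transpose, kroneckerMap_transpose]
  have hdiag : (T₂ ⊗ₖ (T₁ ⊗ₖ T₀))ᵀ *
      (M₂ ⊗ₖ (M₁ ⊗ₖ K₀) + M₂ ⊗ₖ (K₁ ⊗ₖ M₀) + K₂ ⊗ₖ (M₁ ⊗ₖ M₀)) * (T₂ ⊗ₖ (T₁ ⊗ₖ T₀)) =
      diagonal D := by
    simp only [Matrix.mul_add, Matrix.add_mul, kronecker_transpose_mul_kronecker_mul_kronecker,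
      hM₀, hM₁, hM₂, hK₀, hK₁, hK₂, ← diagonal_one, diagonal_kronecker_diagonal, diagonal_add]
    congr 1
    funext p
    simp only [D]
    ring
  have hD : IsUnit (diagonal D).det := by
    rw [det_diagonal]
    exact isUnit_iff_ne_zero.mpr (Finset.prod_ne_zero_iff.mpr fun p _ => hd p.1 p.2.1 p.2.2)
  have hinv := mul_eq_one_of_transpose_mul_mul_eq hD hdiag
  rw [hTt]
  exact ⟨IsUnit.of_mul_eq_one _ hinv, hinv⟩
end

section
/- Let M be a symmetric positive definite real n×n matrix and K a symmetric real n×n matrix. Then there exist an invertible real n×n matrix T and a vector d : Fin n → ℝ such that Tᵀ * M * T = 1 and Tᵀ * K * T = Matrix.diagonal d; that is, the generalized eigenvalue problem K T = M T Λ admits a complete set of M-orthonormal eigenvectors. -/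
/-!
Factor `M = Bᵀ * B` with `B` invertible; the change of coordinates `S = B⁻¹` turns `M` into the
identity and `K` into the symmetric matrix `Sᵀ * K * S`. An orthogonal diagonalization `U` of the
latter keeps the identity fixed, so `T = S * U` works, and `Tᵀ * M` is a left inverse of `T`.
-/

open Matrix

namespace Matrix

variable {ι κ : Type*} [Fintype ι]

theorem IsSymm.transpose_mul_mul {R : Type*} [CommSemiring R] {K : Matrix ι ι R} (hK : K.IsSymm)
    (S : Matrix ι κ R) : (Sᵀ * K * S).IsSymm := by
  simp only [IsSymm, transpose_mul, transpose_transpose, hK.eq, Matrix.mul_assoc]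

variable [DecidableEq ι]

open scoped MatrixOrder in
theorem PosDef.exists_transpose_mul_mul_eq_one {M : Matrix ι ι ℝ} (hM : M.PosDef) :
    ∃ S : Matrix ι ι ℝ, Sᵀ * M * S = 1 := by
  obtain ⟨B, hB, rfl⟩ :=
    CStarAlgebra.isStrictlyPositive_iff_eq_star_mul_self.mp hM.isStrictlyPositive
  lift B to (Matrix ι ι ℝ)ˣ using hB
  refine ⟨↑B⁻¹, ?_⟩
  rw [star_eq_conjTranspose, conjTranspose_eq_transpose_of_trivial, Matrix.mul_assoc,
    Matrix.mul_assoc, Units.mul_inv, Matrix.mul_one, ← transpose_mul, Units.mul_inv, transpose_one]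

theorem IsSymm.exists_orthogonal_diagonalization {B : Matrix ι ι ℝ} (hB : B.IsSymm) :
    ∃ (U : Matrix ι ι ℝ) (d : ι → ℝ), Uᵀ * U = 1 ∧ Uᵀ * B * U = diagonal d := by
  have hB' : B.IsHermitian := isHermitian_iff_isSymm.mpr hB
  refine ⟨hB'.eigenvectorUnitary, hB'.eigenvalues, ?_, ?_⟩
  · simpa [star_eq_conjTranspose] using (mem_unitaryGroup_iff').mp hB'.eigenvectorUnitary.2
  · simpa [Unitary.conjStarAlgAut_star_apply, star_eq_conjTranspose]
      using hB'.conjStarAlgAut_star_eigenvectorUnitary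

end Matrix

/-- Generalized eigendecomposition: for a symmetric positive definite `M` and a
symmetric `K`, there exist an invertible `T` and eigenvalues `d` such that
`Tᵀ * M * T = 1` and `Tᵀ * K * T = diagonal d`; that is, the generalized
eigenvalue problem `K T = M T Λ` admits a complete set of `M`-orthonormal
eigenvectors. -/
theorem generalized_eigendecomposition_exists
    {n : ℕ} (M K : Matrix (Fin n) (Fin n) ℝ)
    (hM : M.PosDef) (hK : K.IsSymm) :
    ∃ (T : Matrix (Fin n) (Fin n) ℝ) (d : Fin n → ℝ),
      IsUnit T.det ∧ Tᵀ * M * T = 1 ∧ Tᵀ * K * T = Matrix.diagonal d := by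
  obtain ⟨S, hS⟩ := hM.exists_transpose_mul_mul_eq_one
  obtain ⟨U, d, hU, hUd⟩ := (hK.transpose_mul_mul S).exists_orthogonal_diagonalization
  have congr_mul : ∀ X : Matrix (Fin n) (Fin n) ℝ,
      (S * U)ᵀ * X * (S * U) = Uᵀ * (Sᵀ * X * S) * U := by
    simp only [transpose_mul, Matrix.mul_assoc, implies_true]
  have hT : (S * U)ᵀ * M * (S * U) = 1 := by rw [congr_mul, hS, Matrix.mul_one, hU]
  refine ⟨S * U, d, isUnit_det_of_left_inverse (B := (S * U)ᵀ * M) hT, hT, ?_⟩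
  rw [congr_mul, hUd]
end

section
/- Let A be a positive definite real n×n matrix and Π a real m×n matrix such that A_loc = Π * A * Πᵀ is invertible, and let P = Πᵀ * A_loc⁻¹ * Π * A. Then the error propagation factor 1 − P is non-expansive in the energy norm: for every v ∈ ℝⁿ, ((1 − P) *ᵥ v) ⬝ᵥ (A *ᵥ ((1 − P) *ᵥ v)) ≤ v ⬝ᵥ (A *ᵥ v). -/
open Matrix

/-! With `B = Π A Πᵀ` and the local residual `w = Π A v`, the correction `u = Πᵀ B⁻¹ w` satisfies
`u ⬝ A v = u ⬝ A u = w ⬝ B⁻¹ w` (the latter because `B B⁻¹ = 1`), so expanding the energy of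
`v - u` gives `v ⬝ A v - w ⬝ B⁻¹ w`. The subtracted term is nonnegative since `B`, a congruence
of the positive semidefinite `A`, is positive semidefinite, hence so is `B⁻¹`. -/

namespace Matrix

variable {n m α : Type*} [Fintype n] [Fintype m] [CommRing α]

lemma IsSymm.sub_dotProduct_mulVec_sub {A : Matrix n n α} (hA : A.IsSymm) (v u : n → α) :
    (v - u) ⬝ᵥ (A *ᵥ (v - u)) = v ⬝ᵥ (A *ᵥ v) - 2 * (u ⬝ᵥ (A *ᵥ v)) + u ⬝ᵥ (A *ᵥ u) := by
  have hsymm : v ⬝ᵥ (A *ᵥ u) = u ⬝ᵥ (A *ᵥ v) := by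
    rw [dotProduct_mulVec, ← mulVec_transpose, hA.eq, dotProduct_comm]
  simp only [mulVec_sub, sub_dotProduct, dotProduct_sub, hsymm]
  ring

lemma IsSymm.energy_one_sub_ritzProjection [DecidableEq n] [DecidableEq m] {A : Matrix n n α}
    (hA : A.IsSymm) (R : Matrix m n α) (hB : IsUnit (R * A * Rᵀ).det) (v : n → α) :
    ((1 - Rᵀ * (R * A * Rᵀ)⁻¹ * R * A) *ᵥ v) ⬝ᵥ (A *ᵥ ((1 - Rᵀ * (R * A * Rᵀ)⁻¹ * R * A) *ᵥ v))
      = v ⬝ᵥ (A *ᵥ v) - (R *ᵥ (A *ᵥ v)) ⬝ᵥ ((R * A * Rᵀ)⁻¹ *ᵥ (R *ᵥ (A *ᵥ v))) := by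
  set B := R * A * Rᵀ
  have hconj (x : m → α) : (Rᵀ *ᵥ x) ⬝ᵥ (A *ᵥ (Rᵀ *ᵥ x)) = x ⬝ᵥ (B *ᵥ x) := by
    rw [dotProduct_comm, dotProduct_transpose_mulVec, mulVec_mulVec, mulVec_mulVec, dotProduct_comm]
  have hcorr : (1 - Rᵀ * B⁻¹ * R * A) *ᵥ v = v - Rᵀ *ᵥ (B⁻¹ *ᵥ (R *ᵥ (A *ᵥ v))) := by
    simp only [sub_mulVec, one_mulVec, mulVec_mulVec, Matrix.mul_assoc]
  have hcross (x : m → α) : (Rᵀ *ᵥ x) ⬝ᵥ (A *ᵥ v) = (R *ᵥ (A *ᵥ v)) ⬝ᵥ x := by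
    rw [dotProduct_comm, dotProduct_transpose_mulVec, dotProduct_comm]
  have hsolve (y : m → α) : B *ᵥ (B⁻¹ *ᵥ y) = y := by
    rw [mulVec_mulVec, mul_nonsing_inv B hB, one_mulVec]
  rw [hcorr, hA.sub_dotProduct_mulVec_sub, hcross, hconj, hsolve, dotProduct_comm (B⁻¹ *ᵥ _)]
  ring

end Matrix

/-- With the exact local solver (`A_loc = Π * A * Πᵀ` invertible), the error
propagation factor `1 − P` with `P = Πᵀ * A_loc⁻¹ * Π * A` is non-expansive in
the energy norm of a positive definite `A`: for every `v`,
`((1 − P) *ᵥ v) ⬝ᵥ (A *ᵥ ((1 − P) *ᵥ v)) ≤ v ⬝ᵥ (A *ᵥ v)`. -/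
theorem error_propagation_nonexpansive_energy_norm
    {n m : ℕ} (A : Matrix (Fin n) (Fin n) ℝ) (hA : A.PosDef)
    (Pr : Matrix (Fin m) (Fin n) ℝ)
    (hloc : IsUnit (Pr * A * Prᵀ).det)
    (v : Fin n → ℝ) :
    (((1 : Matrix (Fin n) (Fin n) ℝ) - Prᵀ * (Pr * A * Prᵀ)⁻¹ * Pr * A).mulVec v) ⬝ᵥ
        (A.mulVec (((1 : Matrix (Fin n) (Fin n) ℝ) -
          Prᵀ * (Pr * A * Prᵀ)⁻¹ * Pr * A).mulVec v)) ≤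
      v ⬝ᵥ A.mulVec v := by
  have hsymm : A.IsSymm := isHermitian_iff_isSymm.mp hA.isHermitian
  have hlocal : (Pr * A * Prᵀ).PosSemidef := by
    simpa only [conjTranspose_eq_transpose_of_trivial] using
      hA.posSemidef.mul_mul_conjTranspose_same Pr
  rw [hsymm.energy_one_sub_ritzProjection Pr hloc v, sub_le_self_iff]
  exact hlocal.inv.dotProduct_mulVec_nonneg _
end
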